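/- arXiv:1807.05400 — 2 statements merged into one kernel-verified Lean document; each statement's English description precedes it below -/
import Mathlib

section
/- Let G be a nontrivial finite group and let A = H/K be an abelian chief factor of G (i.e., H, K are normal in G, K < H, and H/K is a minimal normal subgroup of G/K which is abelian). Then A is non-Frattini (i.e., H/K is not contained in Frat(G/K)) if and only if A is complemented, meaning there exists a subgroup U of G with UH = G and U ∩ H = K. -/
open scoped commutatorElement

/-!
If `H/K` lies outside `Frat(G/K)`, some maximal subgroup `M/K` misses it, so `M H = G`. Since
`H/K` is abelian, `M ∩ H` is normalized by `H` as well as by `M`, hence normal in `G = M H`;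
by minimality of `H/K` it equals `K`, so `M` is a complement. Conversely, a complement `U`
with `H/K ≤ Frat(G/K)` would give `U/K · Frat(G/K) = G/K`, hence `U = G` and `K = H`.
-/

open Subgroup

lemma exists_isCoatom_not_le_of_not_le_frattini {G : Type*} [Group G] {N : Subgroup G}
    (h : ¬ N ≤ frattini G) : ∃ M : Subgroup G, IsCoatom M ∧ ¬ N ≤ M := by
  by_contra! hall
  exact h (le_iInf₂ hall)

lemma eq_top_of_map_mk'_eq_top {G : Type*} [Group G] {K U : Subgroup G} [K.Normal]
    (hKU : K ≤ U) (h : U.map (QuotientGroup.mk' K) = ⊤) : U = ⊤ := by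
  rw [← sup_eq_right.mpr hKU, ← QuotientGroup.comap_map_mk', h, comap_top]

lemma Subgroup.Normal.inf_of_sup_eq_top {G : Type*} [Group G] {U H : Subgroup G} (hH : H.Normal)
    (hsup : U ⊔ H = ⊤) (hcomm : ⁅H, H⁆ ≤ U) : (U ⊓ H).Normal := by
  rw [← normalizer_eq_top_iff, eq_top_iff, ← hsup]
  refine sup_le (le_trans (le_inf le_normalizer le_normalizer_of_normal)
    inf_normalizer_le_normalizer_inf) ?_
  rw [le_normalizer_iff_commutator_le_right]
  exact le_inf ((commutator_mono le_rfl inf_le_right).trans hcomm) (commutator_le_left H _)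

theorem stmt_3_general {G : Type*} [Group G] [Finite G]
    (H K : Subgroup G) [hHn : H.Normal] [hKn : K.Normal] (hKH : K < H)
    (hchief : ∀ N : Subgroup G, N.Normal → K ≤ N → N ≤ H → N = K ∨ N = H)
    (hab : ∀ a ∈ H, ∀ b ∈ H, ⁅a, b⁆ ∈ K) :
    ¬ H.map (QuotientGroup.mk' K) ≤ frattini (G ⧸ K) ↔
      ∃ U : Subgroup G, U ⊔ H = ⊤ ∧ U ⊓ H = K := by
  constructor
  · intro hnf
    obtain ⟨M, hM, hHM⟩ := exists_isCoatom_not_le_of_not_le_frattini hnf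
    set U := M.comap (QuotientGroup.mk' K)
    have hKU : K ≤ U := QuotientGroup.le_comap_mk' K M
    have hsup : U ⊔ H = ⊤ := by
      refine eq_top_of_map_mk'_eq_top (hKU.trans le_sup_left) ?_
      rw [Subgroup.map_sup, map_comap_eq_self_of_surjective (QuotientGroup.mk'_surjective K)]
      exact hM.2 _ (left_lt_sup.mpr hHM)
    have hnorm := hHn.inf_of_sup_eq_top hsup ((commutator_le.mpr hab).trans hKU)
    refine ⟨U, hsup, (hchief _ hnorm (le_inf hKU hKH.le) inf_le_right).resolve_right ?_⟩
    exact fun hUH => hHM (map_le_iff_le_comap.mpr (inf_eq_right.mp hUH))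
  · rintro ⟨U, hsup, hinf⟩ hle
    have hKU : K ≤ U := hinf ▸ inf_le_left
    have hUtop : U = ⊤ := by
      refine eq_top_of_map_mk'_eq_top hKU (frattini_nongenerating (top_le_iff.mp ?_))
      calc ⊤ = (U ⊔ H).map (QuotientGroup.mk' K) := by
            rw [hsup, map_top_of_surjective _ (QuotientGroup.mk'_surjective K)]
        _ ≤ U.map (QuotientGroup.mk' K) ⊔ frattini (G ⧸ K) := by
            rw [Subgroup.map_sup]; exact sup_le_sup_left hle _
    exact hKH.ne' (by rw [← hinf, hUtop, top_inf_eq])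

/-- An abelian chief factor `H/K` of a nontrivial finite group `G` is non-Frattini
(i.e. `H/K` is not contained in `Frat(G/K)`) if and only if it is complemented
(there is a subgroup `U` with `U H = G` and `U ∩ H = K`). -/
theorem stmt_3 {G : Type*} [Group G] [Finite G] [Nontrivial G]
    (H K : Subgroup G) [hHn : H.Normal] [hKn : K.Normal] (hKH : K < H)
    (hchief : ∀ N : Subgroup G, N.Normal → K ≤ N → N ≤ H → N = K ∨ N = H)
    (hab : ∀ a ∈ H, ∀ b ∈ H, ⁅a, b⁆ ∈ K) :
    ¬ H.map (QuotientGroup.mk' K) ≤ frattini (G ⧸ K) ↔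
      ∃ U : Subgroup G, U ⊔ H = ⊤ ∧ U ⊓ H = K :=
  stmt_3_general H K (hHn := hHn) (hKn := hKn) hKH hchief hab
end

section
/- Consider the diagonal action of Sym_k (k ≥ 3) on the set Ω of cosets of the diagonal subgroup D in T^k, where T is a finite nonabelian simple group: σ ∈ Sym_k sends D(t_1,...,t_k) to D(t_{σ(1)},...,t_{σ(k)}). A transposition τ ∈ Sym_k fixes exactly |T|^{k-2} points of Ω and, as a permutation of Ω, is a product of |T|^{k-2}(|T|-1)/2 disjoint 2-cycles; in particular, τ is an even permutation of Ω whenever |T|^{k-2}(|T|-1)/2 is even. -/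
/-- The homomorphism `T → T^k` sending `t` to the constant tuple. -/
def constHom (T : Type*) [Group T] (k : ℕ) : T →* (Fin k → T) where
  toFun t := fun _ => t
  map_one' := rfl
  map_mul' _ _ := rfl

/-- The diagonal subgroup `D = {(t,...,t)} ≤ T^k`. -/
def diagSubgroup (T : Type*) [Group T] (k : ℕ) : Subgroup (Fin k → T) :=
  (constHom T k).range

/-- The set `Ω` of cosets of the diagonal subgroup `D` in `T^k`. -/
abbrev diagCosets (T : Type*) [Group T] (k : ℕ) : Type _ :=
  (Fin k → T) ⧸ diagSubgroup T k

/-- The permutation of the coset space `Ω` induced by `σ ∈ Sym_k`, sending the coset of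
`(t_1,...,t_k)` to the coset of `(t_{σ(1)},...,t_{σ(k)})`. -/
def cosetPerm {T : Type*} [Group T] {k : ℕ} (σ : Equiv.Perm (Fin k)) :
    Equiv.Perm (diagCosets T k) where
  toFun := Quotient.map' (fun x => x ∘ ⇑σ) (by
    intro x y h
    rw [QuotientGroup.leftRel_apply] at h ⊢
    obtain ⟨t, ht⟩ := h
    exact ⟨t, funext fun i => congrFun ht (σ i)⟩)
  invFun := Quotient.map' (fun x => x ∘ ⇑σ⁻¹) (by
    intro x y h
    rw [QuotientGroup.leftRel_apply] at h ⊢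
    obtain ⟨t, ht⟩ := h
    exact ⟨t, funext fun i => congrFun ht (σ⁻¹ i)⟩)
  left_inv := by
    intro q
    induction q using Quotient.inductionOn' with
    | h x =>
      show Quotient.mk'' _ = Quotient.mk'' x
      congr 1
      funext i
      simp
  right_inv := by
    intro q
    induction q using Quotient.inductionOn' with
    | h x =>
      show Quotient.mk'' _ = Quotient.mk'' x
      congr 1
      funext i
      simp


section Aux

variable {T : Type*} [Group T] {k : ℕ}

lemma diag_rel {x y : Fin k → T} (h : x⁻¹ * y ∈ diagSubgroup T k) :
    ∃ t : T, ∀ m, y m = x m * t := by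
  obtain ⟨t, ht⟩ := h
  refine ⟨t, fun m => ?_⟩
  have hm := congrFun ht m
  simp only [constHom, MonoidHom.coe_mk, OneHom.coe_mk, Pi.mul_apply, Pi.inv_apply] at hm
  rw [hm, mul_inv_cancel_left]

lemma diag_mk_eq_mk {x y : Fin k → T} :
    (Quotient.mk'' x : diagCosets T k) = Quotient.mk'' y ↔ ∃ t : T, ∀ m, y m = x m * t := by
  rw [Quotient.eq'', QuotientGroup.leftRel_apply]
  constructor
  · exact diag_rel
  · rintro ⟨t, ht⟩
    refine ⟨t, funext fun m => ?_⟩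
    simp [constHom, ht m]

/-- Normalization equivalence. -/
def normEquiv (i : Fin k) : diagCosets T k ≃ {f : Fin k → T // f i = 1} where
  toFun q := Quotient.liftOn' q
    (fun x => (⟨fun m => x m * (x i)⁻¹, by simp⟩ : {f : Fin k → T // f i = 1}))
    (by
      intro x y h
      rw [QuotientGroup.leftRel_apply] at h
      obtain ⟨t, ht⟩ := diag_rel h
      refine Subtype.ext (funext fun m => ?_)
      simp [ht m, ht i, mul_assoc])
  invFun f := Quotient.mk'' f.1
  left_inv := by
    intro q
    induction q using Quotient.inductionOn' with
    | h x =>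
      show (Quotient.mk'' _ : diagCosets T k) = Quotient.mk'' x
      rw [diag_mk_eq_mk]
      exact ⟨x i, fun m => by simp⟩
  right_inv f := Subtype.ext (funext fun m => by simp [f.2])

/-- Functions vanishing on a decidable set are equivalent to functions on the complement. -/
def constrEquiv (p : Fin k → Prop) [DecidablePred p] :
    {f : Fin k → T // ∀ m, p m → f m = 1} ≃ ({m : Fin k // ¬ p m} → T) where
  toFun f m := f.1 m.1
  invFun g := ⟨fun m => if h : p m then 1 else g ⟨m, h⟩, fun m hm => dif_pos hm⟩
  left_inv f := Subtype.ext (funext fun m => by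
    by_cases h : p m
    · simp [h, f.2 m h]
    · simp [h])
  right_inv g := funext fun m => by simp [m.2]

end Aux


/-- Consider the diagonal action of `Sym_k` (`k ≥ 3`) on the set `Ω` of cosets of the
diagonal subgroup `D` in `T^k`, `T` a finite nonabelian simple group. A transposition
`τ = (i j)` fixes exactly `|T|^(k-2)` points of `Ω`; as a permutation of `Ω` it is an
involution moving `|T|^(k-2)·(|T|-1)` points, i.e. a product of `|T|^(k-2)·(|T|-1)/2`
disjoint 2-cycles; and `τ` is an even permutation of `Ω` whenever
`|T|^(k-2)·(|T|-1)/2` is even. -/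
theorem stmt_16 {T : Type*} [Group T] [Finite T] (hs : IsSimpleGroup T)
    (hnab : ∃ a b : T, a * b ≠ b * a) {k : ℕ} (hk : 3 ≤ k)
    {i j : Fin k} (hij : i ≠ j) :
    Nat.card {ω : diagCosets T k // cosetPerm (Equiv.swap i j) ω = ω}
        = Nat.card T ^ (k - 2) ∧
      cosetPerm (T := T) (Equiv.swap i j) * cosetPerm (Equiv.swap i j) = 1 ∧
      Nat.card {ω : diagCosets T k // cosetPerm (Equiv.swap i j) ω ≠ ω}
        = Nat.card T ^ (k - 2) * (Nat.card T - 1) ∧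
      (Even (Nat.card T ^ (k - 2) * (Nat.card T - 1) / 2) →
        @Equiv.Perm.sign (diagCosets T k) (Classical.decEq _) (Fintype.ofFinite _)
          (cosetPerm (Equiv.swap i j)) = 1) := by
  have happ : ∀ (σ : Equiv.Perm (Fin k)) (x : Fin k → T),
      cosetPerm (T := T) σ (Quotient.mk'' x) = Quotient.mk'' (x ∘ σ) := fun _ _ => rfl
  -- existence of a third index
  have hex : ∃ m : Fin k, m ≠ i ∧ m ≠ j := by
    by_contra h
    push_neg at h
    have hsub : (Finset.univ : Finset (Fin k)) ⊆ {i, j} := by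
      intro m _
      rcases eq_or_ne m i with rfl | hmi
      · simp
      · simp [h m hmi]
    have hle := Finset.card_le_card hsub
    rw [Finset.card_univ, Fintype.card_fin, Finset.card_pair hij] at hle
    omega
  -- characterization of fixed points
  have key : ∀ x : Fin k → T,
      cosetPerm (T := T) (Equiv.swap i j) (Quotient.mk'' x) = Quotient.mk'' x ↔ x i = x j := by
    intro x
    rw [happ, diag_mk_eq_mk]
    constructor
    · rintro ⟨t, ht⟩
      obtain ⟨m, hmi, hmj⟩ := hex
      have hm := ht m
      rw [Function.comp_apply, Equiv.swap_apply_of_ne_of_ne hmi hmj] at hm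
      have ht1 : t = 1 := by
        rwa [left_eq_mul] at hm
      have hi := ht i
      rw [Function.comp_apply, Equiv.swap_apply_left, ht1, mul_one] at hi
      exact hi
    · intro h
      refine ⟨1, fun m => ?_⟩
      rcases eq_or_ne m i with rfl | hmi
      · simp [Equiv.swap_apply_left, h]
      rcases eq_or_ne m j with rfl | hmj
      · simp [Equiv.swap_apply_right, h]
      · simp [Equiv.swap_apply_of_ne_of_ne hmi hmj]
  have hiff : ∀ ω : diagCosets T k,
      (cosetPerm (T := T) (Equiv.swap i j) ω = ω) ↔ ((normEquiv i ω) : Fin k → T) j = 1 := by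
    intro ω
    induction ω using Quotient.inductionOn' with
    | h x =>
      rw [key x]
      show x i = x j ↔ x j * (x i)⁻¹ = 1
      constructor
      · intro h; rw [h]; simp
      · intro h; exact (mul_inv_eq_one.mp h).symm
  -- the fixed point set
  have e1 : {ω : diagCosets T k // cosetPerm (Equiv.swap i j) ω = ω}
      ≃ {f : {f : Fin k → T // f i = 1} // (f : Fin k → T) j = 1} :=
    Equiv.subtypeEquiv (normEquiv i) hiff
  have e2 : {f : {f : Fin k → T // f i = 1} // (f : Fin k → T) j = 1}
      ≃ {f : Fin k → T // f i = 1 ∧ f j = 1} :=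
    Equiv.subtypeSubtypeEquivSubtypeInter (fun f : Fin k → T => f i = 1) (fun f => f j = 1)
  have e3 : {f : Fin k → T // f i = 1 ∧ f j = 1}
      ≃ {f : Fin k → T // ∀ m, (m = i ∨ m = j) → f m = 1} :=
    Equiv.subtypeEquivRight (fun f => by aesop)
  have e_fixed : {ω : diagCosets T k // cosetPerm (Equiv.swap i j) ω = ω}
      ≃ ({m : Fin k // ¬ (m = i ∨ m = j)} → T) :=
    ((e1.trans e2).trans e3).trans (constrEquiv (fun m => m = i ∨ m = j))
  have hsub2 : Nat.card {m : Fin k // ¬ (m = i ∨ m = j)} = k - 2 := by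
    rw [Nat.card_eq_fintype_card, Fintype.card_subtype]
    have hfil : (Finset.univ.filter fun m : Fin k => ¬ (m = i ∨ m = j))
        = ({i, j} : Finset (Fin k))ᶜ := by
      ext m; simp
    rw [hfil, Finset.card_compl, Finset.card_pair hij, Fintype.card_fin]
  have hfix : Nat.card {ω : diagCosets T k // cosetPerm (Equiv.swap i j) ω = ω}
      = Nat.card T ^ (k - 2) := by
    rw [Nat.card_congr e_fixed, Nat.card_fun, hsub2]
  -- involution
  have hinv : cosetPerm (T := T) (Equiv.swap i j) * cosetPerm (Equiv.swap i j) = 1 := by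
    ext ω
    induction ω using Quotient.inductionOn' with
    | h x =>
      show cosetPerm (Equiv.swap i j) (cosetPerm (Equiv.swap i j) (Quotient.mk'' x))
          = Quotient.mk'' x
      rw [happ, happ]
      congr 1
      funext m
      simp [Function.comp, Equiv.swap_apply_self]
  -- total cardinality
  have e_tot : diagCosets T k ≃ ({m : Fin k // ¬ (m = i)} → T) :=
    ((normEquiv i).trans (Equiv.subtypeEquivRight (fun f => by
      constructor
      · rintro h m rfl; exact h
      · intro h; exact h i rfl))).trans (constrEquiv (fun m => m = i))
  have hsub1 : Nat.card {m : Fin k // ¬ (m = i)} = k - 1 := by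
    rw [Nat.card_eq_fintype_card, Fintype.card_subtype]
    have hfil : (Finset.univ.filter fun m : Fin k => ¬ (m = i))
        = ({i} : Finset (Fin k))ᶜ := by
      ext m; simp
    rw [hfil, Finset.card_compl, Finset.card_singleton, Fintype.card_fin]
  have htot : Nat.card (diagCosets T k) = Nat.card T ^ (k - 1) := by
    rw [Nat.card_congr e_tot, Nat.card_fun, hsub1]
  -- moved points
  have hmoved : Nat.card {ω : diagCosets T k // cosetPerm (Equiv.swap i j) ω ≠ ω}
      = Nat.card T ^ (k - 2) * (Nat.card T - 1) := by
    letI : Fintype (diagCosets T k) := Fintype.ofFinite _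
    classical
    have h1 : Nat.card {ω : diagCosets T k // cosetPerm (Equiv.swap i j) ω ≠ ω}
        = Nat.card (diagCosets T k)
          - Nat.card {ω : diagCosets T k // cosetPerm (Equiv.swap i j) ω = ω} := by
      rw [Nat.card_eq_fintype_card, Nat.card_eq_fintype_card, Nat.card_eq_fintype_card]
      exact Fintype.card_subtype_compl _
    rw [h1, htot, hfix]
    have hk1 : k - 1 = (k - 2) + 1 := by omega
    rw [hk1, pow_succ]
    rw [Nat.mul_sub, mul_one]
  refine ⟨hfix, hinv, hmoved, ?_⟩
  -- sign
  intro hE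
  letI instD : DecidableEq (diagCosets T k) := Classical.decEq _
  letI instF : Fintype (diagCosets T k) := Fintype.ofFinite _
  set τ := cosetPerm (T := T) (Equiv.swap i j) with hτ
  have horder : orderOf τ ∣ 2 := orderOf_dvd_of_pow_eq_one (by rw [pow_two]; exact hinv)
  have h2 : ∀ c ∈ τ.cycleType, c = 2 := by
    intro c hc
    have hge := Equiv.Perm.two_le_of_mem_cycleType hc
    have hdvd : c ∣ 2 := by
      have := Multiset.dvd_lcm hc
      rw [Equiv.Perm.lcm_cycleType] at this
      exact this.trans horder
    have := Nat.le_of_dvd (by norm_num) hdvd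
    omega
  have hrep : τ.cycleType = Multiset.replicate (Multiset.card τ.cycleType) 2 :=
    Multiset.eq_replicate_card.mpr h2
  have hsum : τ.cycleType.sum = 2 * Multiset.card τ.cycleType := by
    conv_lhs => rw [hrep]
    rw [Multiset.sum_replicate, smul_eq_mul, mul_comm]
  have hsupp : τ.support.card = Nat.card {ω : diagCosets T k // cosetPerm (Equiv.swap i j) ω ≠ ω} := by
    rw [Nat.card_eq_fintype_card, Fintype.card_subtype]
    congr 1
  have hM : Nat.card T ^ (k - 2) * (Nat.card T - 1) = 2 * Multiset.card τ.cycleType := by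
    rw [← hmoved, ← hsupp, ← Equiv.Perm.sum_cycleType, hsum]
  rw [hM, Nat.mul_div_cancel_left _ (by norm_num)] at hE
  rw [Equiv.Perm.sign_of_cycleType, hsum]
  exact Even.neg_one_pow ((even_two_mul _).add hE)
end
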